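/- Let F be a field with char(F) ≠ 2. Then C(UT_2(F), s) = Id(UT_2(F), s) + F⟨Y∪Z⟩⁺; that is, a polynomial f ∈ F⟨Y∪Z⟩ is *-central for (UT_2(F), s) if and only if f = g + h where g is a *-polynomial identity for (UT_2(F), s) and h is a symmetric polynomial (h* = h). -/

import Mathlib

open scoped BigOperators

set_option maxHeartbeats 1000000
set_option synthInstance.maxHeartbeats 400000

/-- The algebra of 2×2 upper triangular matrices over `F`. -/
def UT2 (F : Type*) [Field F] : Subalgebra F (Matrix (Fin 2) (Fin 2) F) where
  carrier := {M | M 1 0 = 0}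
  mul_mem' := by
    intro a b ha hb
    simp only [Set.mem_setOf_eq] at *
    rw [Matrix.mul_apply, Fin.sum_univ_two, ha, hb]
    ring
  one_mem' := by simp [Matrix.one_apply]
  add_mem' := by
    intro a b ha hb
    simp only [Set.mem_setOf_eq] at *
    simp [Matrix.add_apply, ha, hb]
  zero_mem' := by simp
  algebraMap_mem' := by
    intro r
    simp [Matrix.algebraMap_matrix_apply]

theorem mem_UT2 (F : Type*) [Field F] {M : Matrix (Fin 2) (Fin 2) F} :
    M ∈ UT2 F ↔ M 1 0 = 0 := Iff.rfl

/-- The involution `⋆` on `UT2 F`: `(a c; 0 b) ↦ (b c; 0 a)`. -/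
def starUT (F : Type*) [Field F] (M : ↥(UT2 F)) : ↥(UT2 F) :=
  ⟨!![M.1 1 1, M.1 0 1; 0, M.1 0 0], by rw [mem_UT2]; simp⟩

/-- The involution `s` on `UT2 F`: `(a c; 0 b) ↦ (b -c; 0 a)`. -/
def starS (F : Type*) [Field F] (M : ↥(UT2 F)) : ↥(UT2 F) :=
  ⟨!![M.1 1 1, -(M.1 0 1); 0, M.1 0 0], by rw [mem_UT2]; simp⟩

/-- The free unital associative `F`-algebra `F⟨Y ∪ Z⟩` on the variables
`y_0, y_1, …` (indexed by `Sum.inl`) and `z_0, z_1, …` (indexed by `Sum.inr`). -/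
abbrev FA (F : Type*) [Field F] := FreeAlgebra F (ℕ ⊕ ℕ)

noncomputable def yv (F : Type*) [Field F] (i : ℕ) : FA F := FreeAlgebra.ι F (Sum.inl i)
noncomputable def zv (F : Type*) [Field F] (i : ℕ) : FA F := FreeAlgebra.ι F (Sum.inr i)

noncomputable def fStarAux (F : Type*) [Field F] : FA F →ₐ[F] (FA F)ᵐᵒᵖ :=
  FreeAlgebra.lift F fun v =>
    MulOpposite.op (Sum.elim (fun i => FreeAlgebra.ι F (Sum.inl i))
      (fun i => -FreeAlgebra.ι F (Sum.inr i)) v)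

/-- The involution `*` on `F⟨Y ∪ Z⟩`: the unique `F`-linear anti-automorphism
with `y_i* = y_i` and `z_i* = -z_i`. -/
noncomputable def fStar (F : Type*) [Field F] (f : FA F) : FA F := (fStarAux F f).unop

/-- A symmetric polynomial of `F⟨Y ∪ Z⟩`. -/
def IsSym (F : Type*) [Field F] (f : FA F) : Prop := fStar F f = f
/-- A skew polynomial of `F⟨Y ∪ Z⟩`. -/
def IsSkew (F : Type*) [Field F] (f : FA F) : Prop := fStar F f = -f

/-- A substitution relative to an involution `σ` on `UT2 F`: an algebra homomorphism
sending each `y_i` to a symmetric element and each `z_i` to a skew-symmetric element. -/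
def IsSubstWith (F : Type*) [Field F] (σ : ↥(UT2 F) → ↥(UT2 F))
    (φ : FA F →ₐ[F] ↥(UT2 F)) : Prop :=
  (∀ i, σ (φ (yv F i)) = φ (yv F i)) ∧ (∀ i, σ (φ (zv F i)) = -(φ (zv F i)))

/-- The `*`-polynomial identities of `(UT2 F, σ)`. -/
def IdWith (F : Type*) [Field F] (σ : ↥(UT2 F) → ↥(UT2 F)) : Submodule F (FA F) where
  carrier := {f | ∀ φ : FA F →ₐ[F] ↥(UT2 F), IsSubstWith F σ φ → φ f = 0}
  add_mem' := by
    intro a b ha hb φ hφ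
    rw [map_add, ha φ hφ, hb φ hφ, add_zero]
  zero_mem' := by intro φ _; exact map_zero φ
  smul_mem' := by
    intro c x hx φ hφ
    rw [map_smul, hx φ hφ, smul_zero]

/-- The `*`-central polynomials of `(UT2 F, σ)`. -/
def CWith (F : Type*) [Field F] (σ : ↥(UT2 F) → ↥(UT2 F)) : Submodule F (FA F) where
  carrier := {f | ∀ φ : FA F →ₐ[F] ↥(UT2 F), IsSubstWith F σ φ →
    φ f ∈ Subalgebra.center F ↥(UT2 F)}
  add_mem' := by
    intro a b ha hb φ hφ
    rw [map_add]; exact add_mem (ha φ hφ) (hb φ hφ)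
  zero_mem' := by intro φ _; rw [map_zero]; exact zero_mem _
  smul_mem' := by
    intro c x hx φ hφ
    rw [map_smul]; exact Subalgebra.smul_mem _ (hx φ hφ) c

/-- `⟨z₁z₂⟩^{TS(*)}`: the `F`-linear span of all products of two skew polynomials. -/
def TSz (F : Type*) [Field F] : Submodule F (FA F) :=
  Submodule.span F {f : FA F | ∃ u v, IsSkew F u ∧ IsSkew F v ∧ f = u * v}

/-- The symmetric polynomials `F⟨Y ∪ Z⟩⁺` as a submodule. -/
def SymSub (F : Type*) [Field F] : Submodule F (FA F) where
  carrier := {f | IsSym F f}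
  add_mem' := by
    intro a b ha hb
    simp only [Set.mem_setOf_eq, IsSym, fStar, map_add, MulOpposite.unop_add] at *
    rw [ha, hb]
  zero_mem' := by simp [IsSym, fStar]
  smul_mem' := by
    intro c x hx
    simp only [Set.mem_setOf_eq, IsSym, fStar, map_smul, MulOpposite.unop_smul] at *
    rw [hx]


/-
The center of `UT₂(F)` consists of the scalar matrices, which for `char F ≠ 2` are exactly
the fixed points of `s`. Every substitution `φ` intertwines the involutions,
`φ (f*) = (φ f)^s`, so `f` is `*`-central iff `f - f*` is a `*`-identity. The decomposition
`f = ½ (f - f*) + ½ (f + f*)` then splits a central `f` into an identity and a symmetric part.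
-/

namespace UT2

variable {F : Type*} [Field F]

lemma val_one_zero (M : UT2 F) : M.1 1 0 = 0 := M.2

lemma ext_of_entries {M N : UT2 F} (h00 : M.1 0 0 = N.1 0 0) (h01 : M.1 0 1 = N.1 0 1)
    (h11 : M.1 1 1 = N.1 1 1) : M = N := by
  apply Subtype.ext
  ext i j
  fin_cases i <;> fin_cases j
  · exact h00
  · exact h01
  · exact (val_one_zero M).trans (val_one_zero N).symm
  · exact h11

lemma mem_center_iff (M : UT2 F) :
    M ∈ Subalgebra.center F (UT2 F) ↔ M.1 0 1 = 0 ∧ M.1 1 1 = M.1 0 0 := by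
  rw [Subalgebra.mem_center_iff]
  constructor
  · intro hM
    let E₁₁ : UT2 F := ⟨!![1, 0; 0, 0], by simp [mem_UT2]⟩
    let E₁₂ : UT2 F := ⟨!![0, 1; 0, 0], by simp [mem_UT2]⟩
    have h₁ := congrArg (fun N : UT2 F => N.1 0 1) (hM E₁₁)
    have h₂ := congrArg (fun N : UT2 F => N.1 0 1) (hM E₁₂)
    simp [E₁₁, E₁₂, Matrix.mul_apply, Fin.sum_univ_two] at h₁ h₂
    exact ⟨h₁, h₂⟩
  · rintro ⟨h01, h11⟩ N
    apply ext_of_entries <;>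
      simp [Matrix.mul_apply, Fin.sum_univ_two, val_one_zero M, val_one_zero N, h01, h11] <;> ring

end UT2

section starS

variable {F : Type*} [Field F]

lemma starS_val (M : UT2 F) : (starS F M).1 = !![M.1 1 1, -(M.1 0 1); 0, M.1 0 0] := rfl

lemma starS_mul (M N : UT2 F) : starS F (M * N) = starS F N * starS F M := by
  apply UT2.ext_of_entries <;>
    simp [starS_val, Matrix.mul_apply, Fin.sum_univ_two, UT2.val_one_zero M, UT2.val_one_zero N] <;>
    ring

lemma starS_add (M N : UT2 F) : starS F (M + N) = starS F M + starS F N := by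
  apply UT2.ext_of_entries <;> simp [starS_val, add_comm]

lemma starS_algebraMap (r : F) : starS F (algebraMap F (UT2 F) r) = algebraMap F (UT2 F) r := by
  apply UT2.ext_of_entries <;> simp [starS_val, Matrix.algebraMap_matrix_apply]

lemma starS_eq_self_iff (hchar : ringChar F ≠ 2) (M : UT2 F) :
    starS F M = M ↔ M.1 0 1 = 0 ∧ M.1 1 1 = M.1 0 0 := by
  constructor
  · intro h
    have h01 := congrArg (fun N : UT2 F => N.1 0 1) h
    have h00 := congrArg (fun N : UT2 F => N.1 0 0) h
    simp only [starS_val, Matrix.of_apply, Matrix.cons_val', Matrix.cons_val_zero,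
      Matrix.cons_val_one, Matrix.empty_val', Matrix.cons_val_fin_one] at h01 h00
    exact ⟨(Ring.eq_self_iff_eq_zero_of_char_ne_two hchar).mp h01, h00⟩
  · rintro ⟨h01, h11⟩
    apply UT2.ext_of_entries <;> simp [starS_val, h01, h11]

lemma mem_center_iff_starS_eq_self (hchar : ringChar F ≠ 2) (M : UT2 F) :
    M ∈ Subalgebra.center F (UT2 F) ↔ starS F M = M := by
  rw [UT2.mem_center_iff, starS_eq_self_iff hchar]

end starS

section fStar

variable {F : Type*} [Field F]

lemma fStar_ι_inl (i : ℕ) :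
    fStar F (FreeAlgebra.ι F (Sum.inl i)) = FreeAlgebra.ι F (Sum.inl i) := by
  simp [fStar, fStarAux]

lemma fStar_ι_inr (i : ℕ) :
    fStar F (FreeAlgebra.ι F (Sum.inr i)) = -FreeAlgebra.ι F (Sum.inr i) := by
  simp [fStar, fStarAux]

lemma fStar_mul (a b : FA F) : fStar F (a * b) = fStar F b * fStar F a := by
  simp [fStar]

lemma fStar_add (a b : FA F) : fStar F (a + b) = fStar F a + fStar F b := by
  simp [fStar]

lemma fStar_smul (r : F) (a : FA F) : fStar F (r • a) = r • fStar F a := by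
  simp [fStar]

lemma fStar_algebraMap (r : F) : fStar F (algebraMap F (FA F) r) = algebraMap F (FA F) r := by
  simp [fStar, MulOpposite.algebraMap_apply]

lemma fStar_fStar (f : FA F) : fStar F (fStar F f) = f := by
  induction f using FreeAlgebra.induction with
  | grade0 r => rw [fStar_algebraMap, fStar_algebraMap]
  | grade1 v =>
    rcases v with i | i
    · rw [fStar_ι_inl, fStar_ι_inl]
    · rw [fStar_ι_inr, ← neg_one_smul F, fStar_smul, fStar_ι_inr, neg_one_smul, neg_neg]
  | mul a b ha hb => rw [fStar_mul, fStar_mul, ha, hb]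
  | add a b ha hb => rw [fStar_add, fStar_add, ha, hb]

lemma half_add_fStar_mem_SymSub (f : FA F) :
    (2⁻¹ : F) • (f + fStar F f) ∈ SymSub F := by
  show fStar F _ = _
  rw [fStar_smul, fStar_add, fStar_fStar, add_comm]

end fStar

section subst

variable {F : Type*} [Field F]

lemma IsSubstWith.map_fStar {φ : FA F →ₐ[F] UT2 F} (hφ : IsSubstWith F (starS F) φ)
    (f : FA F) : φ (fStar F f) = starS F (φ f) := by
  induction f using FreeAlgebra.induction with
  | grade0 r => rw [fStar_algebraMap, AlgHom.commutes, starS_algebraMap]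
  | grade1 v =>
    rcases v with i | i
    · rw [fStar_ι_inl]; exact (hφ.1 i).symm
    · rw [fStar_ι_inr, map_neg]; exact (hφ.2 i).symm
  | mul a b ha hb => rw [fStar_mul, map_mul, map_mul, ha, hb, starS_mul]
  | add a b ha hb => rw [fStar_add, map_add, map_add, ha, hb, starS_add]

lemma mem_CWith_starS_iff (hchar : ringChar F ≠ 2) (f : FA F) :
    f ∈ CWith F (starS F) ↔ f - fStar F f ∈ IdWith F (starS F) := by
  refine forall₂_congr fun φ hφ => ?_
  rw [mem_center_iff_starS_eq_self hchar, map_sub, hφ.map_fStar, sub_eq_zero, eq_comm]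

lemma IdWith_le_CWith (σ : UT2 F → UT2 F) : IdWith F σ ≤ CWith F σ := by
  intro f hf φ hφ
  rw [hf φ hφ]
  exact zero_mem _

end subst

theorem stmt_19 (F : Type*) [Field F] (hchar : ringChar F ≠ 2) :
    CWith F (starS F) = IdWith F (starS F) ⊔ SymSub F := by
  refine le_antisymm (fun f hf => ?_) (sup_le (IdWith_le_CWith _) fun f hf => ?_)
  · have h2 : (2 : F) ≠ 0 := Ring.two_ne_zero hchar
    have hsplit : f = (2⁻¹ : F) • (f - fStar F f) + (2⁻¹ : F) • (f + fStar F f) := by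
      rw [← smul_add, sub_add_add_cancel, ← two_smul F, smul_smul, inv_mul_cancel₀ h2,
        one_smul]
    rw [hsplit]
    exact add_mem
      (Submodule.mem_sup_left (Submodule.smul_mem _ _ ((mem_CWith_starS_iff hchar f).1 hf)))
      (Submodule.mem_sup_right (half_add_fStar_mem_SymSub f))
  · rw [mem_CWith_starS_iff hchar, show fStar F f = f from hf, sub_self]
    exact zero_mem _
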